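/- arXiv:1202.2054 — 3 statements merged into one kernel-verified Lean document; each statement's English description precedes it below -/
import Mathlib

section
/- Let f : [0,∞) → ℝ be (α,m)-convex with (α,m) ∈ (0,1]². If 0 ≤ a < b < ∞ and f is integrable on [a,b], then (1/(b-a)) ∫_a^b f(x) dx ≤ (1/2)·[f(a) + f(b) + mα·f(a/m) + mα·f(b/m)]/(α+1). -/
/-!
Substituting `y ↦ y / m` in the definition of `(α,m)`-convexity bounds `f` on the segment from
`y` to `x` by `t ^ α * f x + m * (1 - t ^ α) * f (y / m)`. Integrating over `t ∈ [0,1]` bounds the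
mean value of `f` on `[a,b]` once from each endpoint, and the theorem is the average of the two
bounds.
-/

open intervalIntegral MeasureTheory Set

def IsAlphaMConvex (α m : ℝ) (f : ℝ → ℝ) : Prop :=
  ∀ x, 0 ≤ x → ∀ y, 0 ≤ y → ∀ t ∈ Icc (0:ℝ) 1,
    f (t * x + m * (1 - t) * y) ≤ t ^ α * f x + m * (1 - t ^ α) * f y

section UnitInterval

variable {f : ℝ → ℝ} {x y : ℝ}

lemma intervalIntegrable_comp_lineMap (hf : IntervalIntegrable f volume y x) :
    IntervalIntegrable (fun t => f (t * x + (1 - t) * y)) volume 0 1 := by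
  rcases eq_or_ne x y with rfl | hxy
  · simp only [← add_mul, add_sub_cancel, one_mul]
    exact intervalIntegrable_const
  have h := (hf.comp_add_right y).comp_mul_left (c := x - y)
  rw [sub_self, zero_div, div_self (sub_ne_zero.mpr hxy)] at h
  convert h using 2 with t
  ring_nf

lemma integral_comp_lineMap (hxy : x ≠ y) :
    ∫ t in (0:ℝ)..1, f (t * x + (1 - t) * y) = (x - y)⁻¹ * ∫ u in y..x, f u := by
  have h := integral_comp_mul_add f (sub_ne_zero.mpr hxy) y (a := 0) (b := 1)
  simp only [mul_zero, zero_add, mul_one, sub_add_cancel, smul_eq_mul] at h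
  rw [← h]
  congr 1 with t
  ring_nf

lemma intervalIntegrable_rpow_mul_add_one_sub_rpow_mul {α : ℝ} (hα : -1 < α) (c d : ℝ) :
    IntervalIntegrable (fun t : ℝ => t ^ α * c + (1 - t ^ α) * d) volume 0 1 :=
  ((intervalIntegrable_rpow' hα).mul_const c).add
    ((intervalIntegrable_const.sub (intervalIntegrable_rpow' hα)).mul_const d)

lemma integral_rpow_mul_add_one_sub_rpow_mul {α : ℝ} (hα : -1 < α) (c d : ℝ) :
    ∫ t in (0:ℝ)..1, (t ^ α * c + (1 - t ^ α) * d) = (c + α * d) / (α + 1) := by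
  have hα' : α + 1 ≠ 0 := by linarith
  have hrpow : IntervalIntegrable (fun t : ℝ => t ^ α) volume 0 1 := intervalIntegrable_rpow' hα
  have hval : ∫ t in (0:ℝ)..1, t ^ α = 1 / (α + 1) := by
    rw [integral_rpow (Or.inl hα), Real.one_rpow, Real.zero_rpow hα', sub_zero]
  rw [integral_add (hrpow.mul_const c) ((intervalIntegrable_const.sub hrpow).mul_const d),
    intervalIntegral.integral_mul_const, intervalIntegral.integral_mul_const, integral_sub intervalIntegrable_const hrpow,
    intervalIntegral.integral_const, hval]
  field_simp
  ring

end UnitInterval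

namespace IsAlphaMConvex

variable {α m : ℝ} {f : ℝ → ℝ} {x y : ℝ}

lemma apply_lineMap_le (hf : IsAlphaMConvex α m f) (hm : 0 < m) (hx : 0 ≤ x) (hy : 0 ≤ y)
    {t : ℝ} (ht : t ∈ Icc (0:ℝ) 1) :
    f (t * x + (1 - t) * y) ≤ t ^ α * f x + (1 - t ^ α) * (m * f (y / m)) := by
  have h := hf x hx (y / m) (div_nonneg hy hm.le) t ht
  have hpoint : t * x + m * (1 - t) * (y / m) = t * x + (1 - t) * y := by
    field_simp
  rw [hpoint] at h
  linarith

lemma mul_integral_le (hf : IsAlphaMConvex α m f) (hα : -1 < α) (hm : 0 < m)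
    (hx : 0 ≤ x) (hy : 0 ≤ y) (hxy : x ≠ y) (hint : IntervalIntegrable f volume y x) :
    (x - y)⁻¹ * ∫ u in y..x, f u ≤ (f x + α * (m * f (y / m))) / (α + 1) := by
  rw [← integral_comp_lineMap hxy, ← integral_rpow_mul_add_one_sub_rpow_mul hα]
  exact integral_mono_on zero_le_one (intervalIntegrable_comp_lineMap hint)
    (intervalIntegrable_rpow_mul_add_one_sub_rpow_mul hα _ _)
    fun t ht => hf.apply_lineMap_le hm hx hy ht

end IsAlphaMConvex

theorem alpha_m_convex_hh_right (f : ℝ → ℝ) (α m a b : ℝ)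
    (hα : α ∈ Set.Ioc (0:ℝ) 1) (hm : m ∈ Set.Ioc (0:ℝ) 1)
    (hconv : ∀ x, 0 ≤ x → ∀ y, 0 ≤ y → ∀ t ∈ Set.Icc (0:ℝ) 1,
      f (t * x + m * (1 - t) * y) ≤ t ^ α * f x + m * (1 - t ^ α) * f y)
    (ha : 0 ≤ a) (hab : a < b)
    (hint : IntervalIntegrable f MeasureTheory.volume a b) :
    (1 / (b - a)) * ∫ x in a..b, f x ≤
      (1 / 2) * ((f a + f b + m * α * f (a / m) + m * α * f (b / m)) / (α + 1)) := by
  have hf : IsAlphaMConvex α m f := hconv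
  have hα' : -1 < α := by linarith [hα.1]
  have hb : 0 ≤ b := ha.trans hab.le
  have from_a := hf.mul_integral_le hα' hm.1 ha hb hab.ne hint.symm
  have from_b := hf.mul_integral_le hα' hm.1 hb ha hab.ne' hint
  rw [integral_symm, mul_neg, ← neg_mul, ← inv_neg, neg_sub] at from_a
  have hsplit : (1 / 2) * ((f a + f b + m * α * f (a / m) + m * α * f (b / m)) / (α + 1)) =
      ((f a + α * (m * f (b / m))) / (α + 1) + (f b + α * (m * f (a / m))) / (α + 1)) / 2 := by
    ring
  rw [hsplit, one_div]
  linarith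
end

section
/- Let g : [0,∞) → ℝ be m-convex with m ∈ (0,1], let f : [0,∞) → ℝ be (g,m)-convex dominated, and let 0 ≤ a < b with f, g integrable on [a,b]. Then |(1/(b-a)) ∫_a^b (f(x) + m f(x/m))/2 dx − f((a+b)/2)| ≤ (1/(b-a)) ∫_a^b (g(x) + m g(x/m))/2 dx − g((a+b)/2). -/
/-- `h` is `m`-convex on `[0,∞)`. -/
def MConvex (m : ℝ) (h : ℝ → ℝ) : Prop :=
  ∀ x, 0 ≤ x → ∀ y, 0 ≤ y → ∀ t ∈ Set.Icc (0:ℝ) 1,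
    h (t * x + m * (1 - t) * y) ≤ t * h x + m * (1 - t) * h y

/-- `f` is `(g,m)`-convex dominated on `[0,∞)`. -/
def MDominated (m : ℝ) (g f : ℝ → ℝ) : Prop :=
  ∀ x, 0 ≤ x → ∀ y, 0 ≤ y → ∀ t ∈ Set.Icc (0:ℝ) 1,
    |t * f x + m * (1 - t) * f y - f (t * x + m * (1 - t) * y)| ≤
      t * g x + m * (1 - t) * g y - g (t * x + m * (1 - t) * y)
theorem m_dominated_hh (f g : ℝ → ℝ) (m a b : ℝ)
    (hm : m ∈ Set.Ioc (0:ℝ) 1)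
    (hg : MConvex m g) (hf : MDominated m g f)
    (ha : 0 ≤ a) (hab : a < b)
    (hfint : IntervalIntegrable f MeasureTheory.volume a b)
    (hgint : IntervalIntegrable g MeasureTheory.volume a b)
    (hfint' : IntervalIntegrable (fun x => f (x / m)) MeasureTheory.volume a b)
    (hgint' : IntervalIntegrable (fun x => g (x / m)) MeasureTheory.volume a b) :
    |(1 / (b - a)) * (∫ x in a..b, (f x + m * f (x / m)) / 2) - f ((a + b) / 2)| ≤
      (1 / (b - a)) * (∫ x in a..b, (g x + m * g (x / m)) / 2) - g ((a + b) / 2) := by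
  obtain ⟨hm0, hm1⟩ := hm
  have hba : (0:ℝ) < b - a := by linarith
  set c : ℝ := (a + b) / 2 with hc
  -- reflected integrability
  have hfr : IntervalIntegrable (fun x => f ((a + b - x) / m)) MeasureTheory.volume a b := by
    have h := (hfint'.comp_sub_left (a + b)).symm
    simpa using h
  have hgr : IntervalIntegrable (fun x => g ((a + b - x) / m)) MeasureTheory.volume a b := by
    have h := (hgint'.comp_sub_left (a + b)).symm
    simpa using h
  -- pointwise key inequality
  have key : ∀ x ∈ Set.Icc a b,
      |(f x + m * f ((a + b - x) / m)) / 2 - f c| ≤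
        (g x + m * g ((a + b - x) / m)) / 2 - g c := by
    intro x hx
    have hx0 : 0 ≤ x := le_trans ha hx.1
    have hy0 : 0 ≤ (a + b - x) / m := by
      apply div_nonneg _ hm0.le
      have := hx.2
      linarith
    have harg : (1:ℝ)/2 * x + m * (1 - 1/2) * ((a + b - x) / m) = c := by
      rw [hc]; field_simp; ring
    have h := hf x hx0 ((a + b - x) / m) hy0 (1/2) ⟨by norm_num, by norm_num⟩
    rw [harg] at h
    have e1 : (f x + m * f ((a + b - x) / m)) / 2 - f c =
        (1:ℝ)/2 * f x + m * (1 - 1/2) * f ((a + b - x) / m) - f c := by ring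
    rw [e1]
    have e2 : (g x + m * g ((a + b - x) / m)) / 2 - g c =
        (1:ℝ)/2 * g x + m * (1 - 1/2) * g ((a + b - x) / m) - g c := by ring
    rw [e2]
    exact h
  -- integrability of combined integrands
  have hF : IntervalIntegrable (fun x => (f x + m * f ((a + b - x) / m)) / 2 - f c)
      MeasureTheory.volume a b :=
    ((hfint.add (hfr.const_mul m)).div_const 2).sub intervalIntegrable_const
  have hG : IntervalIntegrable (fun x => (g x + m * g ((a + b - x) / m)) / 2 - g c)
      MeasureTheory.volume a b :=
    ((hgint.add (hgr.const_mul m)).div_const 2).sub intervalIntegrable_const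
  -- main integral inequality
  have habs : |∫ x in a..b, ((f x + m * f ((a + b - x) / m)) / 2 - f c)| ≤
      ∫ x in a..b, ((g x + m * g ((a + b - x) / m)) / 2 - g c) := by
    calc |∫ x in a..b, ((f x + m * f ((a + b - x) / m)) / 2 - f c)|
        ≤ ∫ x in a..b, |(f x + m * f ((a + b - x) / m)) / 2 - f c| :=
          intervalIntegral.abs_integral_le_integral_abs hab.le
      _ ≤ ∫ x in a..b, ((g x + m * g ((a + b - x) / m)) / 2 - g c) :=
          intervalIntegral.integral_mono_on hab.le hF.abs hG key
  -- reflection identities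
  have hrefl_f : (∫ x in a..b, f ((a + b - x) / m)) = ∫ x in a..b, f (x / m) := by
    have := intervalIntegral.integral_comp_sub_left (a := a) (b := b)
      (fun x => f (x / m)) (a + b)
    simpa using this
  have hrefl_g : (∫ x in a..b, g ((a + b - x) / m)) = ∫ x in a..b, g (x / m) := by
    have := intervalIntegral.integral_comp_sub_left (a := a) (b := b)
      (fun x => g (x / m)) (a + b)
    simpa using this
  -- split integrals
  have hsplitf : (∫ x in a..b, ((f x + m * f ((a + b - x) / m)) / 2 - f c)) =
      (∫ x in a..b, (f x + m * f (x / m)) / 2) - (b - a) * f c := by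
    rw [intervalIntegral.integral_sub ((hfint.add (hfr.const_mul m)).div_const 2)
      intervalIntegrable_const, intervalIntegral.integral_const, smul_eq_mul]
    congr 1
    rw [intervalIntegral.integral_div, intervalIntegral.integral_div,
      intervalIntegral.integral_add hfint (hfr.const_mul m),
      intervalIntegral.integral_add hfint (hfint'.const_mul m),
      intervalIntegral.integral_const_mul, intervalIntegral.integral_const_mul, hrefl_f]
  have hsplitg : (∫ x in a..b, ((g x + m * g ((a + b - x) / m)) / 2 - g c)) =
      (∫ x in a..b, (g x + m * g (x / m)) / 2) - (b - a) * g c := by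
    rw [intervalIntegral.integral_sub ((hgint.add (hgr.const_mul m)).div_const 2)
      intervalIntegrable_const, intervalIntegral.integral_const, smul_eq_mul]
    congr 1
    rw [intervalIntegral.integral_div, intervalIntegral.integral_div,
      intervalIntegral.integral_add hgint (hgr.const_mul m),
      intervalIntegral.integral_add hgint (hgint'.const_mul m),
      intervalIntegral.integral_const_mul, intervalIntegral.integral_const_mul, hrefl_g]
  rw [hsplitf, hsplitg] at habs
  set If := ∫ x in a..b, (f x + m * f (x / m)) / 2
  set Ig := ∫ x in a..b, (g x + m * g (x / m)) / 2
  have hpos : (0:ℝ) < 1 / (b - a) := by positivity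
  have e3 : (1 / (b - a)) * If - f c = (1 / (b - a)) * (If - (b - a) * f c) := by
    field_simp
  rw [e3, abs_mul, abs_of_pos hpos]
  have := mul_le_mul_of_nonneg_left habs hpos.le
  calc (1 / (b - a)) * |If - (b - a) * f c|
      ≤ (1 / (b - a)) * (Ig - (b - a) * g c) := this
    _ = (1 / (b - a)) * Ig - g c := by field_simp
end

section
/- Let r ≠ 0, −1, let g be a positive r-convex function on [a,b], and let f : [a,b] → (0,∞) be (g,r)-convex dominated, with f(a) ≠ f(b), g(a) ≠ g(b), and f, g integrable on [a,b] (a < b). Then |(r/(r+1))·(f(a)^{r+1} − f(b)^{r+1})/(f(a)^r − f(b)^r) − (1/(b-a)) ∫_a^b f(x) dx| ≤ (r/(r+1))·(g(a)^{r+1} − g(b)^{r+1})/(g(a)^r − g(b)^r) − (1/(b-a)) ∫_a^b g(x) dx. -/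
/-!
Integrating the domination inequality along the chord from `a` to `b` (the point
`t ∈ [a, b]` is `l a + (1 - l) b` with `l = (b - t) / (b - a)`) gives
`|∫ M_f - ∫ f| ≤ ∫ M_g - ∫ g`, where `M_h(t) = (l h(a)^r + (1 - l) h(b)^r)^{1/r}`.
The base of `M_h` is affine in `t`, so `∫_a^b M_h` is computed by `∫ s^{1/r} ds`, and its
average over `[a, b]` is exactly `r/(r+1) · (h(a)^{r+1} - h(b)^{r+1}) / (h(a)^r - h(b)^r)`.
-/

open Set intervalIntegral MeasureTheory

noncomputable def powerMean (r l x y : ℝ) : ℝ := (l * x ^ r + (1 - l) * y ^ r) ^ (1 / r)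

section Chord

variable {a b : ℝ}

lemma chord_weight_mem_Icc (hab : a < b) {t : ℝ} (ht : t ∈ Icc a b) :
    (b - t) / (b - a) ∈ Icc (0 : ℝ) 1 := by
  have hba : 0 < b - a := sub_pos.2 hab
  exact ⟨div_nonneg (by linarith [ht.2]) hba.le, (div_le_one hba).2 (by linarith [ht.1])⟩

lemma chord_weight_mul_add_eq (hab : a ≠ b) (t : ℝ) :
    (b - t) / (b - a) * a + (1 - (b - t) / (b - a)) * b = t := by
  have : b - a ≠ 0 := sub_ne_zero.2 hab.symm
  field_simp
  ring

lemma convex_combo_pos {l A B : ℝ} (hl : l ∈ Icc (0 : ℝ) 1) (hA : 0 < A) (hB : 0 < B) :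
    0 < l * A + (1 - l) * B := by
  rcases hl.1.eq_or_lt with rfl | hl0
  · simpa using hB
  · nlinarith [mul_nonneg (sub_nonneg.2 hl.2) hB.le]

lemma integral_chord_rpow {A B p : ℝ} (hA : 0 < A) (hB : 0 < B) (hAB : A ≠ B) (hab : a < b)
    (hp : p ≠ -1) :
    ∫ t in a..b, ((b - t) / (b - a) * A + (1 - (b - t) / (b - a)) * B) ^ p
      = (b - a) * ((B ^ (p + 1) - A ^ (p + 1)) / ((B - A) * (p + 1))) := by
  have hba : b - a ≠ 0 := (sub_pos.2 hab).ne'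
  have hd : (B - A) / (b - a) ≠ 0 := div_ne_zero (sub_ne_zero.2 hAB.symm) hba
  have haffine : ∀ t, (b - t) / (b - a) * A + (1 - (b - t) / (b - a)) * B
      = (B - A) / (b - a) * t + (b * A - a * B) / (b - a) := fun t => by
    field_simp
    ring
  have hda : (B - A) / (b - a) * a + (b * A - a * B) / (b - a) = A := by field_simp; ring
  have hdb : (B - A) / (b - a) * b + (b * A - a * B) / (b - a) = B := by field_simp; ring
  have h0 : (0 : ℝ) ∉ uIcc A B := fun h => by
    rcases mem_uIcc.1 h with ⟨h1, _⟩ | ⟨h1, _⟩ <;> linarith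
  simp_rw [haffine]
  rw [integral_comp_mul_add (· ^ p) hd, hda, hdb, integral_rpow (Or.inr ⟨hp, h0⟩), smul_eq_mul]
  field_simp

lemma intervalIntegrable_powerMean_chord {r x y : ℝ} (hx : 0 < x) (hy : 0 < y) (hab : a < b) :
    IntervalIntegrable (fun t => powerMean r ((b - t) / (b - a)) x y) volume a b := by
  refine ContinuousOn.intervalIntegrable fun t ht => ContinuousAt.continuousWithinAt ?_
  rw [uIcc_of_le hab.le] at ht
  have hbase := convex_combo_pos (chord_weight_mem_Icc hab ht)
    (Real.rpow_pos_of_pos hx r) (Real.rpow_pos_of_pos hy r)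
  unfold powerMean
  exact ContinuousAt.rpow_const (by fun_prop) (Or.inl hbase.ne')

lemma average_powerMean_chord {r x y : ℝ} (hx : 0 < x) (hy : 0 < y) (hxy : x ≠ y)
    (hr0 : r ≠ 0) (hr1 : r ≠ -1) (hab : a < b) :
    r / (r + 1) * ((x ^ (r + 1) - y ^ (r + 1)) / (x ^ r - y ^ r))
      = 1 / (b - a) * ∫ t in a..b, powerMean r ((b - t) / (b - a)) x y := by
  have hba : b - a ≠ 0 := (sub_pos.2 hab).ne'
  have hp : 1 / r ≠ -1 := fun h => hr1 (by field_simp at h; linarith)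
  have hxy' : x ^ r ≠ y ^ r := fun h => hxy ((Real.rpow_left_inj hx.le hy.le hr0).1 h)
  have hpow : ∀ z : ℝ, 0 < z → (z ^ r) ^ (1 / r + 1) = z ^ (r + 1) := fun z hz => by
    rw [← Real.rpow_mul hz.le]
    congr 1
    field_simp
    ring
  unfold powerMean
  rw [integral_chord_rpow (Real.rpow_pos_of_pos hx r) (Real.rpow_pos_of_pos hy r)
    hxy' hab hp, hpow x hx, hpow y hy]
  have hinv : 1 / r + 1 = (r + 1) / r := by field_simp; ring
  rw [hinv, ← mul_assoc, one_div_mul_cancel hba, one_mul, ← neg_sub (x ^ (r + 1)),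
    ← neg_sub (x ^ r), neg_mul, neg_div_neg_eq]
  have : x ^ r - y ^ r ≠ 0 := sub_ne_zero.2 hxy'
  field_simp

end Chord

lemma abs_integral_sub_le_integral_sub {u f v g : ℝ → ℝ} {a b : ℝ} (hab : a ≤ b)
    (hu : IntervalIntegrable u volume a b) (hf : IntervalIntegrable f volume a b)
    (hv : IntervalIntegrable v volume a b) (hg : IntervalIntegrable g volume a b)
    (h : ∀ t ∈ Icc a b, |u t - f t| ≤ v t - g t) :
    |(∫ t in a..b, u t) - ∫ t in a..b, f t| ≤ (∫ t in a..b, v t) - ∫ t in a..b, g t :=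
  calc |(∫ t in a..b, u t) - ∫ t in a..b, f t|
      = |∫ t in a..b, (u t - f t)| := by rw [integral_sub hu hf]
    _ ≤ ∫ t in a..b, |u t - f t| := abs_integral_le_integral_abs hab
    _ ≤ ∫ t in a..b, (v t - g t) := integral_mono_on hab (hu.sub hf).abs (hv.sub hg) h
    _ = (∫ t in a..b, v t) - ∫ t in a..b, g t := integral_sub hv hg

theorem r_dominated_gill_general (f g : ℝ → ℝ) (r a b : ℝ) (hr0 : r ≠ 0) (hr1 : r ≠ -1)
    (hab : a < b)
    (hgpos : ∀ x ∈ Set.Icc a b, 0 < g x)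
    (hfpos : ∀ x ∈ Set.Icc a b, 0 < f x)
    (hf : ∀ x ∈ Set.Icc a b, ∀ y ∈ Set.Icc a b, ∀ l ∈ Set.Icc (0:ℝ) 1,
      |(l * f x ^ r + (1 - l) * f y ^ r) ^ (1 / r) - f (l * x + (1 - l) * y)| ≤
        (l * g x ^ r + (1 - l) * g y ^ r) ^ (1 / r) - g (l * x + (1 - l) * y))
    (hfne : f a ≠ f b) (hgne : g a ≠ g b)
    (hfint : IntervalIntegrable f MeasureTheory.volume a b)
    (hgint : IntervalIntegrable g MeasureTheory.volume a b) :
    |(r / (r + 1)) * ((f a ^ (r + 1) - f b ^ (r + 1)) / (f a ^ r - f b ^ r))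
        - (1 / (b - a)) * ∫ x in a..b, f x| ≤
      (r / (r + 1)) * ((g a ^ (r + 1) - g b ^ (r + 1)) / (g a ^ r - g b ^ r))
        - (1 / (b - a)) * ∫ x in a..b, g x := by
  have ha : a ∈ Icc a b := left_mem_Icc.2 hab.le
  have hb : b ∈ Icc a b := right_mem_Icc.2 hab.le
  have hchord : ∀ t ∈ Icc a b,
      |powerMean r ((b - t) / (b - a)) (f a) (f b) - f t|
        ≤ powerMean r ((b - t) / (b - a)) (g a) (g b) - g t := fun t ht => by
    simpa only [powerMean, chord_weight_mul_add_eq hab.ne t] using hf a ha b hb _ (chord_weight_mem_Icc hab ht)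
  rw [average_powerMean_chord (hfpos a ha) (hfpos b hb) hfne hr0 hr1 hab,
    average_powerMean_chord (hgpos a ha) (hgpos b hb) hgne hr0 hr1 hab,
    ← mul_sub, ← mul_sub, abs_mul, abs_of_pos (one_div_pos.2 (sub_pos.2 hab))]
  exact mul_le_mul_of_nonneg_left
    (abs_integral_sub_le_integral_sub hab.le
      (intervalIntegrable_powerMean_chord (hfpos a ha) (hfpos b hb) hab) hfint
      (intervalIntegrable_powerMean_chord (hgpos a ha) (hgpos b hb) hab) hgint hchord)
    (one_div_pos.2 (sub_pos.2 hab)).le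

theorem r_dominated_gill (f g : ℝ → ℝ) (r a b : ℝ) (hr0 : r ≠ 0) (hr1 : r ≠ -1)
    (hab : a < b)
    (hgpos : ∀ x ∈ Set.Icc a b, 0 < g x)
    (hfpos : ∀ x ∈ Set.Icc a b, 0 < f x)
    (hg : ∀ x ∈ Set.Icc a b, ∀ y ∈ Set.Icc a b, ∀ l ∈ Set.Icc (0:ℝ) 1,
      g (l * x + (1 - l) * y) ≤ (l * g x ^ r + (1 - l) * g y ^ r) ^ (1 / r))
    (hf : ∀ x ∈ Set.Icc a b, ∀ y ∈ Set.Icc a b, ∀ l ∈ Set.Icc (0:ℝ) 1,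
      |(l * f x ^ r + (1 - l) * f y ^ r) ^ (1 / r) - f (l * x + (1 - l) * y)| ≤
        (l * g x ^ r + (1 - l) * g y ^ r) ^ (1 / r) - g (l * x + (1 - l) * y))
    (hfne : f a ≠ f b) (hgne : g a ≠ g b)
    (hfint : IntervalIntegrable f MeasureTheory.volume a b)
    (hgint : IntervalIntegrable g MeasureTheory.volume a b) :
    |(r / (r + 1)) * ((f a ^ (r + 1) - f b ^ (r + 1)) / (f a ^ r - f b ^ r))
        - (1 / (b - a)) * ∫ x in a..b, f x| ≤
      (r / (r + 1)) * ((g a ^ (r + 1) - g b ^ (r + 1)) / (g a ^ r - g b ^ r))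
        - (1 / (b - a)) * ∫ x in a..b, g x :=
  r_dominated_gill_general f g r a b hr0 hr1 hab hgpos hfpos hf hfne hgne hfint hgint
end
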